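/- arXiv:1002.4130 — 3 statements merged into one kernel-verified Lean document; each statement's English description precedes it below -/
import Mathlib

section
/- Let H be an atomic monoid and a ∈ H with at least two R-equivalence classes of factorizations (|R_a| ≥ 2). Then c(a) ≥ μ(a), where μ(a) = sup over R-classes ρ of Z(a) of min{|z| : z ∈ ρ}. -/
open Multiset
open scoped Classical ENNReal

/-- The set of atoms (irreducible elements) of a reduced monoid `M`. -/
abbrev Atom (M : Type) [CancelCommMonoid M] : Type := {u : M // Irreducible u}

/-- The factorization homomorphism `π : Z(H) → H`, where the factorization monoid
`Z(H)` is realized as the free commutative monoid (multiset) over the atoms. -/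
def fprod {M : Type} [CancelCommMonoid M] (z : Multiset (Atom M)) : M :=
  (z.map Subtype.val).prod

/-- The set of factorizations `Z(a)` of `a`. -/
def Zf {M : Type} [CancelCommMonoid M] (a : M) : Set (Multiset (Atom M)) :=
  {z | fprod z = a}

/-- `M` is reduced: the only unit is `1`. -/
def Reduced (M : Type) [CancelCommMonoid M] : Prop := ∀ u : M, IsUnit u → u = 1

/-- `M` is atomic: every non-unit is a product of atoms. -/
def Atomic (M : Type) [CancelCommMonoid M] : Prop :=
  ∀ a : M, ¬ IsUnit a → ∃ z : Multiset (Atom M), fprod z = a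

/-- The distance between two factorizations. -/
noncomputable def fdist {M : Type} [CancelCommMonoid M] (z z' : Multiset (Atom M)) : ℕ :=
  max (card (z - z')) (card (z' - z))

/-- The catenary degree `c(a)`: the least `N` such that any two factorizations of `a`
can be concatenated by an `N`-chain of factorizations of `a`. -/
noncomputable def cat {M : Type} [CancelCommMonoid M] (a : M) : ℕ∞ :=
  sInf {N : ℕ∞ | ∀ z ∈ Zf a, ∀ z' ∈ Zf a,
    Relation.ReflTransGen (fun u v => v ∈ Zf a ∧ (fdist u v : ℕ∞) ≤ N) z z'}

/-- The catenary degree `c(H)`. -/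
noncomputable def catH (M : Type) [CancelCommMonoid M] : ℕ∞ := ⨆ a : M, cat a

/-- The `R`-relation on factorizations of `a`: two factorizations are `R`-related if
they can be joined by a chain of factorizations of `a` whose consecutive members have a
common atom (the degenerate case `z = z' = 1` is the reflexivity case). -/
def RRel {M : Type} [CancelCommMonoid M] (a : M) :
    Multiset (Atom M) → Multiset (Atom M) → Prop :=
  Relation.ReflTransGen (fun u v => u ∈ Zf a ∧ v ∈ Zf a ∧ u ∩ v ≠ 0)

/-- `|R_a| ≥ 2`: `a` has at least two `R`-equivalence classes of factorizations. -/
def TwoClasses {M : Type} [CancelCommMonoid M] (a : M) : Prop :=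
  ∃ z ∈ Zf a, ∃ z' ∈ Zf a, ¬ RRel a z z'

/-- `μ(a)`: the supremum over the `R`-classes `ρ` of `Z(a)` of `min {|z| : z ∈ ρ}`. -/
noncomputable def mu {M : Type} [CancelCommMonoid M] (a : M) : ℕ∞ :=
  ⨆ z ∈ Zf a, ⨅ w ∈ {w | w ∈ Zf a ∧ RRel a z w}, (card w : ℕ∞)

/-- `μ(H) = sup {μ(a) : a ∈ H, |R_a| ≥ 2}`. -/
noncomputable def muH (M : Type) [CancelCommMonoid M] : ℕ∞ :=
  ⨆ a : M, ⨆ (_ : TwoClasses a), mu a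

/-- The monoid of relations `M_H ⊆ Z(H) × Z(H)`. -/
def MHset (M : Type) [CancelCommMonoid M] :
    Set (Multiset (Atom M) × Multiset (Atom M)) :=
  {p | fprod p.1 = fprod p.2}

/-- Atoms of the (reduced) monoid of relations `M_H`. -/
def IsRelAtom {M : Type} [CancelCommMonoid M]
    (p : Multiset (Atom M) × Multiset (Atom M)) : Prop :=
  p ∈ MHset M ∧ p ≠ 0 ∧
    ∀ q r, q ∈ MHset M → r ∈ MHset M → p = q + r → q = 0 ∨ r = 0


/-! A catenary chain from `z` to a factorization outside the `R`-class of `z` must, at some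
step, leave that class: it passes from some `u` in the class to some `v` outside it. Then
`u` and `v` have no common atom, so their distance is at least `|u|`, which is at least
the minimal length in the class of `z`. -/

theorem Relation.ReflTransGen.exists_step_of_not {α : Type*} {r : α → α → Prop}
    {P : α → Prop} {a b : α} (h : Relation.ReflTransGen r a b) (ha : P a) (hb : ¬ P b) :
    ∃ u v, r u v ∧ P u ∧ ¬ P v := by
  induction h with
  | refl => exact absurd ha hb
  | @tail c d _ hcd ih =>
    by_cases hc : P c
    · exact ⟨c, d, hcd, hc, hb⟩
    · exact ih hc

theorem Multiset.sub_eq_self_of_inter_eq_zero {α : Type*} [DecidableEq α] {u v : Multiset α}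
    (h : u ∩ v = 0) : u - v = u := by
  ext x
  have hx := congrArg (Multiset.count x) h
  rw [Multiset.count_inter, Multiset.count_zero] at hx
  rw [Multiset.count_sub]
  omega

section

variable {M : Type} [CancelCommMonoid M] {a : M}

theorem card_le_fdist_of_inter_eq_zero {u v : Multiset (Atom M)} (h : u ∩ v = 0) :
    card u ≤ fdist u v := by
  rw [fdist, Multiset.sub_eq_self_of_inter_eq_zero h]
  exact le_max_left _ _

theorem RRel.symm {z w : Multiset (Atom M)} (h : RRel a z w) : RRel a w z :=
  haveI : Std.Symm fun u v : Multiset (Atom M) => u ∈ Zf a ∧ v ∈ Zf a ∧ u ∩ v ≠ 0 :=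
    ⟨fun _ _ ⟨hu, hv, huv⟩ => ⟨hv, hu, by rwa [Multiset.inter_comm]⟩⟩
  Relation.ReflTransGen.stdSymm.symm _ _ h

theorem RRel.mem_Zf {z w : Multiset (Atom M)} (h : RRel a z w) (hz : z ∈ Zf a) :
    w ∈ Zf a := by
  rcases h.cases_tail with rfl | ⟨_, _, _, hw, _⟩
  exacts [hz, hw]

theorem TwoClasses.exists_not_RRel (h : TwoClasses a) (z : Multiset (Atom M)) :
    ∃ z' ∈ Zf a, ¬ RRel a z z' := by
  obtain ⟨z₁, hz₁, z₂, hz₂, hz₁₂⟩ := h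
  by_cases hzz₁ : RRel a z z₁
  · exact ⟨z₂, hz₂, fun hzz₂ => hz₁₂ (hzz₁.symm.trans hzz₂)⟩
  · exact ⟨z₁, hz₁, hzz₁⟩

theorem exists_RRel_card_le_of_chain {N : ℕ∞} {z z' : Multiset (Atom M)} (hz : z ∈ Zf a)
    (hzz' : ¬ RRel a z z')
    (hchain : Relation.ReflTransGen (fun u v => v ∈ Zf a ∧ (fdist u v : ℕ∞) ≤ N) z z') :
    ∃ u ∈ Zf a, RRel a z u ∧ (card u : ℕ∞) ≤ N := by
  obtain ⟨u, v, ⟨hv, huvN⟩, hzu, hzv⟩ :=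
    hchain.exists_step_of_not (P := RRel a z) Relation.ReflTransGen.refl hzz'
  have hu := hzu.mem_Zf hz
  have huv : u ∩ v = 0 := by
    by_contra huv
    exact hzv (hzu.tail ⟨hu, hv, huv⟩)
  exact ⟨u, hu, hzu, le_trans (by exact_mod_cast card_le_fdist_of_inter_eq_zero huv) huvN⟩

end

theorem cat_ge_mu_general (M : Type) [CancelCommMonoid M]
    (a : M) (h2 : TwoClasses a) :
    mu a ≤ cat a := by
  refine iSup₂_le fun z hz => le_sInf fun N hN => ?_
  obtain ⟨z', hz', hzz'⟩ := h2.exists_not_RRel z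
  obtain ⟨u, hu, hzu, huN⟩ := exists_RRel_card_le_of_chain hz hzz' (hN z hz z' hz')
  exact (iInf₂_le u ⟨hu, hzu⟩).trans huN

/-- **Proposition 3.4.** Let `H` be an atomic monoid and `a ∈ H` with `|R_a| ≥ 2`.
Then `c(a) ≥ μ(a)`. -/
theorem cat_ge_mu (M : Type) [CancelCommMonoid M]
    (hred : Reduced M) (hat : Atomic M)
    (a : M) (h2 : TwoClasses a) :
    mu a ≤ cat a :=
  cat_ge_mu_general M a h2
end

section
/- Let H be an atomic monoid, P the set of primes of H_red, and T = A(H_red) \ P. The homomorphism φ : M_H → F(P) × F(T) × F(T) given by φ((qx, qy)) = (q, x, y), for q ∈ F(P) and x, y ∈ F(T), is a divisor theory. In particular, M_H is a Krull monoid. -/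
/-! The prime part of a factorization is determined by the element it factors (a prime occurs
with the same multiplicity in every factorization), so `φ(p) ≤ φ(q)` forces `p ≤ q`
componentwise, and `M_H` is saturated in `Z(H) × Z(H)` by cancellativity. For the gcd property,
a prime `t` is `gcd φ(t, t)`; a non-prime atom `t` divides some `ab` without dividing `a` or `b`,
which gives a relation `(t z, w)` with `t ∉ w`, and then `(0, t, 0) = gcd (φ(t z, w), φ(t, t))`. -/

open Multiset
open scoped Classical ENNReal

/-- An atom of (the reduced monoid) `M` which is a prime element. -/
def IsPrimeAtom {M : Type} [CancelCommMonoid M] (u : Atom M) : Prop :=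
  ∀ a b : M, u.1 ∣ a * b → u.1 ∣ a ∨ u.1 ∣ b

/-- Extract from a factorization the sub-multiset of its atoms satisfying `pr`,
as a multiset over the subtype `{u // pr u}` (component in a free monoid). -/
noncomputable def part {M : Type} [CancelCommMonoid M] (pr : Atom M → Prop)
    (z : Multiset (Atom M)) : Multiset {u : Atom M // pr u} :=
  (z.filter pr).attach.map fun u => ⟨u.1, (Multiset.mem_filter.mp u.2).2⟩

/-- `φ : M_H → F(P) × F(T) × F(T)`, `φ((qx, qy)) = (q, x, y)` where `q` is the prime
part and `x, y` the non-prime parts of the two factorizations. -/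
noncomputable def phi {M : Type} [CancelCommMonoid M]
    (p : Multiset (Atom M) × Multiset (Atom M)) :
    Multiset {u : Atom M // IsPrimeAtom u} × Multiset {u : Atom M // ¬ IsPrimeAtom u} ×
      Multiset {u : Atom M // ¬ IsPrimeAtom u} :=
  (part IsPrimeAtom p.1, part (fun u => ¬ IsPrimeAtom u) p.1,
    part (fun u => ¬ IsPrimeAtom u) p.2)

/-- The basis elements (prime divisors) of the free monoid `F(P) × F(T) × F(T)`. -/
def IsBasisEl {M : Type} [CancelCommMonoid M]
    (e : Multiset {u : Atom M // IsPrimeAtom u} × Multiset {u : Atom M // ¬ IsPrimeAtom u} ×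
      Multiset {u : Atom M // ¬ IsPrimeAtom u}) : Prop :=
  (∃ p, e = ({p}, 0, 0)) ∨ (∃ t, e = (0, {t}, 0)) ∨ (∃ t, e = (0, 0, {t}))

section PhiDivisorTheory

variable {M : Type} [CancelCommMonoid M]

lemma fprod_add (z w : Multiset (Atom M)) : fprod (z + w) = fprod z * fprod w := by
  simp [fprod]

lemma fprod_cons (u : Atom M) (z : Multiset (Atom M)) : fprod (u ::ₘ z) = u.1 * fprod z := by
  simp [fprod]

lemma dvd_fprod_of_mem {u : Atom M} {z : Multiset (Atom M)} (h : u ∈ z) : u.1 ∣ fprod z :=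
  dvd_prod (mem_map_of_mem _ h)

lemma exists_add_eq_of_le_of_mem_MHset {p q : Multiset (Atom M) × Multiset (Atom M)}
    (hp : p ∈ MHset M) (hq : q ∈ MHset M) (hle : p ≤ q) : ∃ r ∈ MHset M, p + r = q := by
  obtain ⟨r, rfl⟩ := exists_add_of_le hle
  refine ⟨r, mul_left_cancel (a := fprod p.1) ?_, rfl⟩
  rw [← fprod_add, ← Prod.fst_add, (hq : fprod _ = fprod _), Prod.snd_add, fprod_add,
    ← (hp : fprod p.1 = fprod p.2)]

section Part

variable (pr : Atom M → Prop)

lemma map_val_part (z : Multiset (Atom M)) : (part pr z).map Subtype.val = z.filter pr := by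
  simp only [part, map_map, Function.comp_def]
  exact attach_map_val _

lemma part_add (z w : Multiset (Atom M)) : part pr (z + w) = part pr z + part pr w :=
  map_injective Subtype.val_injective <| by simp [map_val_part, filter_add]

lemma part_le_part_iff {z w : Multiset (Atom M)} :
    part pr z ≤ part pr w ↔ z.filter pr ≤ w.filter pr := by
  rw [← map_le_map_iff Subtype.val_injective, map_val_part, map_val_part]

lemma mem_part {t : {u : Atom M // pr u}} {z : Multiset (Atom M)} :
    t ∈ part pr z ↔ t.1 ∈ z := by
  rw [← mem_map_of_injective Subtype.val_injective, map_val_part, mem_filter]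
  exact and_iff_left t.2

lemma part_singleton_of_pos {u : Atom M} (h : pr u) :
    part pr {u} = {(⟨u, h⟩ : {v // pr v})} :=
  map_injective Subtype.val_injective <| by simp [map_val_part, filter_singleton, h]

lemma part_singleton_of_neg {u : Atom M} (h : ¬ pr u) : part pr {u} = 0 :=
  map_injective Subtype.val_injective <| by simp [map_val_part, filter_singleton, h]

lemma le_of_part_le_of_part_le {z w : Multiset (Atom M)} (h : part pr z ≤ part pr w)
    (h' : part (fun u => ¬ pr u) z ≤ part (fun u => ¬ pr u) w) : z ≤ w := by
  rw [part_le_part_iff] at h h'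
  rw [← filter_add_not pr z, ← filter_add_not pr w]
  convert add_le_add h h'

end Part

namespace IsPrimeAtom

variable {u : Atom M}

lemma mem_of_dvd_fprod (hred : Reduced M) (hu : IsPrimeAtom u) {z : Multiset (Atom M)}
    (h : u.1 ∣ fprod z) : u ∈ z := by
  induction z using Multiset.induction with
  | empty => exact absurd (isUnit_of_dvd_one (by simpa [fprod] using h)) u.2.not_isUnit
  | cons a w ih =>
    rw [fprod_cons] at h
    rcases hu a.1 (fprod w) h with ⟨c, hc⟩ | h
    · have hc1 : c = 1 := hred c ((a.2.isUnit_or_isUnit hc).resolve_left u.2.not_isUnit)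
      have hau : a = u := Subtype.ext (by rw [hc, hc1, mul_one])
      exact hau ▸ mem_cons_self a w
    · exact mem_cons_of_mem (ih h)

lemma count_le_count_of_fprod_eq (hred : Reduced M) (hu : IsPrimeAtom u)
    {z z' : Multiset (Atom M)} (h : fprod z = fprod z') : z.count u ≤ z'.count u := by
  induction hn : z.count u generalizing z z' with
  | zero => exact Nat.zero_le _
  | succ n ih =>
    obtain ⟨w, rfl⟩ := exists_cons_of_mem (count_pos.1 (by omega) : u ∈ z)
    obtain ⟨w', rfl⟩ := exists_cons_of_mem (hu.mem_of_dvd_fprod hred (h ▸ dvd_fprod_of_mem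
      (mem_cons_self u w)))
    rw [fprod_cons, fprod_cons] at h
    rw [count_cons_self] at hn ⊢
    exact Nat.succ_le_succ (ih (mul_left_cancel h) (Nat.succ_injective hn))

lemma count_eq_of_fprod_eq (hred : Reduced M) (hu : IsPrimeAtom u)
    {z z' : Multiset (Atom M)} (h : fprod z = fprod z') : z.count u = z'.count u :=
  le_antisymm (hu.count_le_count_of_fprod_eq hred h) (hu.count_le_count_of_fprod_eq hred h.symm)

end IsPrimeAtom

lemma part_isPrimeAtom_eq_of_fprod_eq (hred : Reduced M) {z z' : Multiset (Atom M)}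
    (h : fprod z = fprod z') : part IsPrimeAtom z = part IsPrimeAtom z' := by
  refine map_injective Subtype.val_injective ?_
  rw [map_val_part, map_val_part]
  ext u
  by_cases hu : IsPrimeAtom u
  · simp [hu, hu.count_eq_of_fprod_eq hred h]
  · simp [hu]

lemma phi_add (p q : Multiset (Atom M) × Multiset (Atom M)) : phi (p + q) = phi p + phi q := by
  simp only [phi, Prod.fst_add, Prod.snd_add, part_add, Prod.mk_add_mk]

lemma le_of_phi_le (hred : Reduced M) {p q : Multiset (Atom M) × Multiset (Atom M)}
    (hp : p ∈ MHset M) (hq : q ∈ MHset M) (h : phi p ≤ phi q) : p ≤ q := by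
  obtain ⟨hP, hT₁, hT₂⟩ := h
  refine ⟨le_of_part_le_of_part_le _ hP hT₁, le_of_part_le_of_part_le _ ?_ hT₂⟩
  rwa [← part_isPrimeAtom_eq_of_fprod_eq hred hp, ← part_isPrimeAtom_eq_of_fprod_eq hred hq]

lemma phi_singleton_singleton_of_isPrimeAtom (t : {u : Atom M // IsPrimeAtom u}) :
    phi ({t.1}, {t.1}) = ({t}, 0, 0) := by
  simp only [phi, part_singleton_of_pos _ t.2, part_singleton_of_neg (fun u => ¬ IsPrimeAtom u)
    (not_not_intro t.2)]

lemma phi_singleton_singleton_of_not_isPrimeAtom (t : {u : Atom M // ¬ IsPrimeAtom u}) :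
    phi ({t.1}, {t.1}) = (0, {t}, {t}) := by
  simp only [phi, part_singleton_of_pos (fun u => ¬ IsPrimeAtom u) t.2,
    part_singleton_of_neg IsPrimeAtom t.2]

lemma exists_cons_mem_MHset_of_not_isPrimeAtom (hred : Reduced M) (hat : Atomic M)
    {t : Atom M} (ht : ¬ IsPrimeAtom t) :
    ∃ z w : Multiset (Atom M), (t ::ₘ z, w) ∈ MHset M ∧ t ∉ w := by
  simp only [IsPrimeAtom, not_forall, not_or] at ht
  obtain ⟨a, b, ⟨c, hc⟩, hna, hnb⟩ := ht
  have hua : ¬ IsUnit a := fun h => hnb (by simpa [hred a h] using Dvd.intro c hc.symm)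
  have hub : ¬ IsUnit b := fun h => hna (by simpa [hred b h] using Dvd.intro c hc.symm)
  have huc : ¬ IsUnit c := fun h => by
    rw [hred c h, mul_one] at hc
    exact (t.2.isUnit_or_isUnit hc.symm).elim hua hub
  obtain ⟨za, rfl⟩ := hat a hua
  obtain ⟨zb, rfl⟩ := hat b hub
  obtain ⟨zc, rfl⟩ := hat c huc
  refine ⟨zc, za + zb, ?_, fun hmem => ?_⟩
  · change fprod (t ::ₘ zc) = fprod (za + zb)
    rw [fprod_cons, fprod_add, hc]
  · rcases mem_add.1 hmem with h | h
    exacts [hna (dvd_fprod_of_mem h), hnb (dvd_fprod_of_mem h)]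

abbrev PhiCodomain (M : Type) [CancelCommMonoid M] : Type :=
  Multiset {u : Atom M // IsPrimeAtom u} × Multiset {u : Atom M // ¬ IsPrimeAtom u} ×
    Multiset {u : Atom M // ¬ IsPrimeAtom u}

def IsGCDOfPhiImage (e : PhiCodomain M)
    (S : Finset (Multiset (Atom M) × Multiset (Atom M))) : Prop :=
  (↑S : Set _) ⊆ MHset M ∧ S.Nonempty ∧ (∀ s ∈ S, e ≤ phi s) ∧
    ∀ d, (∀ s ∈ S, d ≤ phi s) → d ≤ e

lemma isGCDOfPhiImage_pair {e : PhiCodomain M} {a b : Multiset (Atom M) × Multiset (Atom M)}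
    (ha : a ∈ MHset M) (hb : b ∈ MHset M)
    (hea : e ≤ phi a) (heb : e ≤ phi b) (hgcd : ∀ d, d ≤ phi a → d ≤ phi b → d ≤ e) :
    IsGCDOfPhiImage e {a, b} := by
  refine ⟨?_, Finset.insert_nonempty _ _, ?_,
    fun d hd => hgcd d (hd a (by simp)) (hd b (by simp))⟩
  · simp [Set.insert_subset_iff, ha, hb]
  · simp [hea, heb]

lemma exists_isGCDOfPhiImage_of_isBasisEl (hred : Reduced M) (hat : Atomic M)
    {e : PhiCodomain M} (he : IsBasisEl e) :
    ∃ S, IsGCDOfPhiImage e S := by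
  rcases he with ⟨t, rfl⟩ | ⟨t, rfl⟩ | ⟨t, rfl⟩
  · have hφ := phi_singleton_singleton_of_isPrimeAtom t
    exact ⟨_, isGCDOfPhiImage_pair rfl rfl hφ.ge hφ.ge fun d hd _ => hφ ▸ hd⟩
  all_goals
    obtain ⟨z, w, hmem, htw⟩ := exists_cons_mem_MHset_of_not_isPrimeAtom hred hat t.2
    have htz : {t} ≤ part (fun u => ¬ IsPrimeAtom u) (t.1 ::ₘ z) :=
      singleton_le.2 ((mem_part _).2 (mem_cons_self _ _))
    have hdisj : Disjoint {t} (part (fun u => ¬ IsPrimeAtom u) w) :=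
      singleton_disjoint.2 (mt (mem_part _).1 htw)
    have hφ := phi_singleton_singleton_of_not_isPrimeAtom t
  · refine ⟨_, isGCDOfPhiImage_pair (b := ({t.1}, {t.1})) hmem rfl
      ⟨zero_le _, htz, zero_le _⟩ (hφ ▸ ⟨le_rfl, le_rfl, zero_le _⟩)
      fun d ⟨_, _, hdw⟩ hdt => ?_⟩
    obtain ⟨hd₁, hd₂, hd₃⟩ := hφ ▸ hdt
    exact ⟨hd₁, hd₂, hdisj hd₃ hdw⟩
  · refine ⟨_, isGCDOfPhiImage_pair (a := (w, t.1 ::ₘ z)) (b := ({t.1}, {t.1})) hmem.symm rfl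
      ⟨zero_le _, zero_le _, htz⟩ (hφ ▸ ⟨le_rfl, zero_le _, le_rfl⟩)
      fun d ⟨_, hdw, _⟩ hdt => ?_⟩
    obtain ⟨hd₁, hd₂, hd₃⟩ := hφ ▸ hdt
    exact ⟨hd₁, hdisj hd₂ hdw, hd₃⟩

end PhiDivisorTheory

noncomputable def tripleToFinsupp {α β γ : Type*} (x : Multiset α × Multiset β × Multiset γ) :
    α ⊕ β ⊕ γ →₀ ℕ :=
  (toFinsupp x.1).sumElim ((toFinsupp x.2.1).sumElim (toFinsupp x.2.2))

lemma tripleToFinsupp_add {α β γ : Type*} (x y : Multiset α × Multiset β × Multiset γ) :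
    tripleToFinsupp (x + y) = tripleToFinsupp x + tripleToFinsupp y := by
  simp [tripleToFinsupp, Finsupp.sumElim_add]

lemma tripleToFinsupp_le_iff {α β γ : Type*} {x y : Multiset α × Multiset β × Multiset γ} :
    tripleToFinsupp x ≤ tripleToFinsupp y ↔ x ≤ y := by
  simp [tripleToFinsupp, Finsupp.le_def, Sum.forall, Prod.le_def, le_iff_count, toFinsupp_apply]

/-- **Lemma 4.2.2.** `φ : M_H → F(P) × F(T) × F(T)`, `φ((qx,qy)) = (q,x,y)`, is a
divisor theory: it is a homomorphism, a divisor homomorphism (divisibility in the free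
monoid, i.e. the componentwise multiset order, reflects divisibility in `M_H`), and every
basis element of `F(P) × F(T) × F(T)` is the greatest common divisor of the image of a
finite subset of `M_H`.  In particular, `M_H` is a Krull monoid: it admits a divisor
homomorphism into a free abelian monoid. -/
theorem phi_divisor_theory (M : Type) [CancelCommMonoid M]
    (hred : Reduced M) (hat : Atomic M) :
    (∀ p ∈ MHset M, ∀ q ∈ MHset M, phi (p + q) = phi p + phi q) ∧
    (∀ p ∈ MHset M, ∀ q ∈ MHset M, phi p ≤ phi q → ∃ r ∈ MHset M, p + r = q) ∧
    (∀ e, IsBasisEl e → ∃ S : Finset (Multiset (Atom M) × Multiset (Atom M)),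
      (↑S : Set _) ⊆ MHset M ∧ S.Nonempty ∧
      (∀ s ∈ S, e ≤ phi s) ∧ ∀ d, (∀ s ∈ S, d ≤ phi s) → d ≤ e) ∧
    (∃ (ι : Type) (ψ : Multiset (Atom M) × Multiset (Atom M) → ι →₀ ℕ),
      (∀ p ∈ MHset M, ∀ q ∈ MHset M, ψ (p + q) = ψ p + ψ q) ∧
      (∀ p ∈ MHset M, ∀ q ∈ MHset M, ψ p ≤ ψ q → ∃ r ∈ MHset M, p + r = q)) := by
  have hdiv : ∀ p ∈ MHset M, ∀ q ∈ MHset M, phi p ≤ phi q → ∃ r ∈ MHset M, p + r = q :=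
    fun p hp q hq h => exists_add_eq_of_le_of_mem_MHset hp hq (le_of_phi_le hred hp hq h)
  refine ⟨fun p _ q _ => phi_add p q, hdiv,
    fun e he => exists_isGCDOfPhiImage_of_isBasisEl hred hat he, _,
    fun p => tripleToFinsupp (phi p),
    fun p _ q _ => (congrArg tripleToFinsupp (phi_add p q)).trans (tripleToFinsupp_add _ _),
    fun p hp q hq h => hdiv p hp q hq (tripleToFinsupp_le_iff.1 h)⟩
end

section
/- Let H be an atomic monoid. Then c(H) = sup{ c(a) : a ∈ H, A_a(M_H) ≠ ∅ }: the catenary degree of H is already attained as the supremum of catenary degrees over those elements a supporting an atom of the monoid of relations. -/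
open Multiset
open scoped Classical ENNReal

/-- `A_a(M_H) ≠ ∅`: there is an atom of `M_H` over `a`. -/
def HasRelAtom {M : Type} [CancelCommMonoid M] (a : M) : Prop :=
  ∃ p : Multiset (Atom M) × Multiset (Atom M), IsRelAtom p ∧ fprod p.1 = a

/-! Every relation `(z, z')` of `M_H` is a finite sum of atoms of `M_H`, since the first
component of a nonzero relation is a nonempty factorization and so its length drops along
any nontrivial splitting. Writing `(z, z') = ∑ (xᵢ, yᵢ)` and replacing the summands `xᵢ` of
`z` by `yᵢ` one at a time, each replacement is bridged by a `c(π(xᵢ))`-chain of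
factorizations of `π(xᵢ)`, translated by the untouched part of the factorization. -/

variable {M : Type} [CancelCommMonoid M]

abbrev ChainRel (a : M) (N : ℕ∞) : Multiset (Atom M) → Multiset (Atom M) → Prop :=
  Relation.ReflTransGen (fun u v => v ∈ Zf a ∧ (fdist u v : ℕ∞) ≤ N)

lemma eq_zero_of_fprod_eq_one {z : Multiset (Atom M)} (h : fprod z = 1) : z = 0 := by
  by_contra hz
  obtain ⟨u, hu⟩ := Multiset.exists_mem_of_ne_zero hz
  have hdvd : u.val ∣ fprod z := Multiset.dvd_prod (Multiset.mem_map_of_mem _ hu)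
  rw [h] at hdvd
  exact u.2.not_isUnit (isUnit_of_dvd_one hdvd)

lemma fst_ne_zero_of_mem_MHset {p : Multiset (Atom M) × Multiset (Atom M)}
    (hp : p ∈ MHset M) (h0 : p ≠ 0) : p.1 ≠ 0 := by
  intro h1
  have h2 : fprod p.2 = 1 := by rw [← show fprod p.1 = fprod p.2 from hp, h1]; simp [fprod]
  exact h0 (Prod.ext h1 (eq_zero_of_fprod_eq_one h2))

lemma exists_list_isRelAtom_sum_eq {p : Multiset (Atom M) × Multiset (Atom M)}
    (hp : p ∈ MHset M) : ∃ L : List _, (∀ q ∈ L, IsRelAtom q) ∧ L.sum = p := by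
  induction hn : card p.1 using Nat.strong_induction_on generalizing p with
  | _ n ih =>
    by_cases h0 : p = 0
    · exact ⟨[], by simp, by simp [h0]⟩
    by_cases hatom : IsRelAtom p
    · exact ⟨[p], by simpa using hatom, by simp⟩
    obtain ⟨q, r, hq, hr, rfl, hq0, hr0⟩ :
        ∃ q r, q ∈ MHset M ∧ r ∈ MHset M ∧ p = q + r ∧ q ≠ 0 ∧ r ≠ 0 := by
      by_contra! h
      exact hatom ⟨hp, h0, fun q r hq hr hqr => or_iff_not_imp_left.2 (h q r hq hr hqr)⟩
    have hq1 := Multiset.card_pos.2 (fst_ne_zero_of_mem_MHset hq hq0)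
    have hr1 := Multiset.card_pos.2 (fst_ne_zero_of_mem_MHset hr hr0)
    have hcard : card (q + r).1 = card q.1 + card r.1 := by simp
    obtain ⟨Lq, hLq, rfl⟩ := ih _ (by omega) hq rfl
    obtain ⟨Lr, hLr, rfl⟩ := ih _ (by omega) hr rfl
    refine ⟨Lq ++ Lr, ?_, List.sum_append⟩
    simpa [or_imp, forall_and] using And.intro hLq hLr

lemma fdist_add_left (c z z' : Multiset (Atom M)) : fdist (c + z) (c + z') = fdist z z' := by
  simp only [fdist, add_tsub_add_eq_tsub_left]

lemma chainRel_cat {a : M} {z z' : Multiset (Atom M)} (hz : z ∈ Zf a) (hz' : z' ∈ Zf a) :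
    ChainRel a (cat a) z z' :=
  csInf_mem (s := {N : ℕ∞ | ∀ z ∈ Zf a, ∀ z' ∈ Zf a, ChainRel a N z z'})
    ⟨⊤, fun _ _ _ hz' => Relation.ReflTransGen.single ⟨hz', le_top⟩⟩ z hz z' hz'

lemma cat_le_of_forall_chainRel {a : M} {N : ℕ∞}
    (h : ∀ z ∈ Zf a, ∀ z' ∈ Zf a, ChainRel a N z z') : cat a ≤ N :=
  sInf_le h

lemma ChainRel.mono {a : M} {N N' : ℕ∞} (hN : N ≤ N') {z z' : Multiset (Atom M)}
    (h : ChainRel a N z z') : ChainRel a N' z z' :=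
  Relation.ReflTransGen.mono (fun _ _ huv => ⟨huv.1, huv.2.trans hN⟩) _ _ h

lemma ChainRel.add_left {a b : M} {N : ℕ∞} {c x y : Multiset (Atom M)} (ha : fprod c * b = a)
    (h : ChainRel b N x y) : ChainRel a N (c + x) (c + y) := by
  refine Relation.ReflTransGen.lift (c + ·) (fun u v huv => ⟨?_, ?_⟩) x y h
  · rw [Zf, Set.mem_ofPred_eq, fprod_add, show fprod v = b from huv.1, ha]
  · rw [fdist_add_left]
    exact huv.2

lemma chainRel_add_sum {a : M} {N : ℕ∞} :
    ∀ (L : List (Multiset (Atom M) × Multiset (Atom M))) (u : Multiset (Atom M)),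
      (∀ q ∈ L, q ∈ MHset M ∧ cat (fprod q.1) ≤ N) → fprod (u + L.sum.1) = a →
      ChainRel a N (u + L.sum.1) (u + L.sum.2)
  | [], _, _, _ => by simpa using Relation.ReflTransGen.refl
  | q :: L, u, hL, ha => by
    obtain ⟨⟨hq, hcat⟩, hL⟩ := List.forall_mem_cons.1 hL
    have hq : fprod q.1 = fprod q.2 := hq
    have ha' : fprod (u + L.sum.1) * fprod q.1 = a := by
      simpa [fprod_add, mul_comm, mul_left_comm, mul_assoc] using ha
    have hswap : ChainRel a N (u + L.sum.1 + q.1) (u + L.sum.1 + q.2) :=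
      ((chainRel_cat rfl hq.symm).mono hcat).add_left ha'
    have hrest : ChainRel a N (u + q.2 + L.sum.1) (u + q.2 + L.sum.2) :=
      chainRel_add_sum L (u + q.2) hL (by rw [← ha', hq, ← fprod_add, add_right_comm])
    rw [add_right_comm] at hrest
    simp only [List.sum_cons, Prod.fst_add, Prod.snd_add]
    convert hswap.trans hrest using 1 <;> abel

theorem cat_eq_sup_hasRelAtom_general (M : Type) [CancelCommMonoid M] :
    catH M = ⨆ a : M, ⨆ (_ : HasRelAtom a), cat a := by
  refine le_antisymm (iSup_le fun a => cat_le_of_forall_chainRel fun z hz z' hz' => ?_)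
    (iSup₂_le fun a _ => le_iSup cat a)
  have hzz' : (z, z') ∈ MHset M := show fprod z = fprod z' from hz.trans hz'.symm
  obtain ⟨L, hL, hsum⟩ := exists_list_isRelAtom_sum_eq hzz'
  have hLcat : ∀ q ∈ L, q ∈ MHset M ∧ cat (fprod q.1) ≤ ⨆ b, ⨆ (_ : HasRelAtom b), cat b :=
    fun q hq => ⟨(hL q hq).1, le_iSup₂ (f := fun b (_ : HasRelAtom b) => cat b) _ ⟨q, hL q hq, rfl⟩⟩
  simpa [hsum] using chainRel_add_sum L 0 hLcat (by rw [hsum, zero_add]; exact hz)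

/-- **Theorem 4.8.** `c(H) = sup {c(a) : a ∈ H, A_a(M_H) ≠ ∅}`. -/
theorem cat_eq_sup_hasRelAtom (M : Type) [CancelCommMonoid M]
    (hred : Reduced M) (hat : Atomic M) :
    catH M = ⨆ a : M, ⨆ (_ : HasRelAtom a), cat a :=
  cat_eq_sup_hasRelAtom_general M
end
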